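/- arXiv:2504.03764 — 6 statements merged into one kernel-verified Lean document; each statement's English description precedes it below -/
import Mathlib

section
/- Let 𝒳(t) = 𝒯₂(R, [p v]) with Ṙ = R[ω]ₓ, ṗ = v, v̇ = g + Ra. Then 𝒳 satisfies 𝒳̇ = 𝒳𝒰 + 𝒢𝒳 + [𝒟, 𝒳], where 𝒰 = [[[ω]ₓ, 0, a],[0_{2×3}, 0_{2×2}]], 𝒢 = [[0_{3×3}, 0, g],[0_{2×3}, 0_{2×2}]], 𝒟 = [[0_{3×3}, 0_{3×2}],[0_{2×3}, [[0,0],[-1,0]]]], and [A,B] = AB − BA. -/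
open Matrix

def Tn (n : ℕ) (R : Matrix (Fin 3) (Fin 3) ℝ) (x : Matrix (Fin 3) (Fin n) ℝ) :
    Matrix (Fin 3 ⊕ Fin n) (Fin 3 ⊕ Fin n) ℝ :=
  Matrix.fromBlocks R x 0 1

def cols2 (p v : Fin 3 → ℝ) : Matrix (Fin 3) (Fin 2) ℝ :=
  Matrix.of fun i j => ![p i, v i] j

/-- The skew-symmetric matrix [ω]ₓ with [ω]ₓ y = ω × y. -/
def skew (ω : Fin 3 → ℝ) : Matrix (Fin 3) (Fin 3) ℝ :=
  !![0, -ω 2, ω 1; ω 2, 0, -ω 0; -ω 1, ω 0, 0]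

/-- 𝒰 = [[[ω]ₓ, 0, a],[0,0]]. -/
def Umat (ω a : Fin 3 → ℝ) : Matrix (Fin 3 ⊕ Fin 2) (Fin 3 ⊕ Fin 2) ℝ :=
  Matrix.fromBlocks (skew ω) (cols2 0 a) 0 0

/-- 𝒢 = [[0, 0, g],[0,0]]. -/
def Gmat (g : Fin 3 → ℝ) : Matrix (Fin 3 ⊕ Fin 2) (Fin 3 ⊕ Fin 2) ℝ :=
  Matrix.fromBlocks 0 (cols2 0 g) 0 0

/-- 𝒟 = [[0,0],[0,[[0,0],[-1,0]]]]. -/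
def Dmat : Matrix (Fin 3 ⊕ Fin 2) (Fin 3 ⊕ Fin 2) ℝ :=
  Matrix.fromBlocks 0 0 0 !![0, 0; -1, 0]

/-- The compact SE₂(3) form of the rigid-body kinematics:
if Ṙ = R[ω]ₓ, ṗ = v, v̇ = g + Ra, then 𝒳 = 𝒯₂(R,[p v]) satisfies
𝒳̇ = 𝒳𝒰 + 𝒢𝒳 + [𝒟, 𝒳] where [A,B] = AB − BA. -/
theorem SE23_compact_kinematics
    (R : ℝ → Matrix (Fin 3) (Fin 3) ℝ) (p v : ℝ → Fin 3 → ℝ)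
    (ω a : ℝ → Fin 3 → ℝ) (g : Fin 3 → ℝ)
    (hR : ∀ t i j, HasDerivAt (fun τ => R τ i j) ((R t * skew (ω t)) i j) t)
    (hp : ∀ t i, HasDerivAt (fun τ => p τ i) (v t i) t)
    (hv : ∀ t i, HasDerivAt (fun τ => v τ i) (g i + (R t *ᵥ a t) i) t) :
    ∀ t i j,
      HasDerivAt (fun τ => Tn 2 (R τ) (cols2 (p τ) (v τ)) i j)
        ((Tn 2 (R t) (cols2 (p t) (v t)) * Umat (ω t) (a t) +
          Gmat g * Tn 2 (R t) (cols2 (p t) (v t)) +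
          (Dmat * Tn 2 (R t) (cols2 (p t) (v t)) -
            Tn 2 (R t) (cols2 (p t) (v t)) * Dmat)) i j) t := by
  intro t i j
  have key : ∀ x : ℝ,
      (Tn 2 (R x) (cols2 (p x) (v x)) * Umat (ω x) (a x) +
        Gmat g * Tn 2 (R x) (cols2 (p x) (v x)) +
        (Dmat * Tn 2 (R x) (cols2 (p x) (v x)) -
          Tn 2 (R x) (cols2 (p x) (v x)) * Dmat)) i j =
      (Sum.elim (fun i => Sum.elim (fun j => (R x * skew (ω x)) i j)
        (fun j => ![v x i, g i + (R x *ᵥ a x) i] j))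
        (fun _ => Sum.elim (fun _ => (0:ℝ)) (fun _ => 0)) i j) := by
    intro x
    obtain i | i := i <;> obtain j | j := j <;>
      simp [Tn, Umat, Gmat, Dmat, cols2, skew, Matrix.mul_apply,
        Matrix.mulVec, dotProduct, Fin.sum_univ_succ, Fin.sum_univ_two,
        Fintype.sum_sum_type, Matrix.one_apply] <;>
      fin_cases j <;>
      simp [Fin.sum_univ_succ] <;> ring
  rw [key t]
  obtain i | i := i <;> obtain j | j := j
  · simpa [Tn] using hR t i j
  · fin_cases j
    · simpa [Tn, cols2] using hp t i
    · simpa [Tn, cols2] using hv t i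
  · simpa [Tn] using hasDerivAt_const t (0:ℝ)
  · simpa [Tn] using hasDerivAt_const t ((1 : Matrix (Fin 2) (Fin 2) ℝ) i j)
end

section
/- Let 𝒳 and 𝒳̂ both satisfy the matrix ODE Ẋ = X𝒰 + 𝒢X + [𝒟, X] (with the same 𝒰(t), 𝒢, 𝒟 as in the SE₂(3) formulation of rigid-body kinematics). Then the right-invariant error ℰ = 𝒳𝒳̂⁻¹ satisfies ℰ̇ = 𝒢ℰ − ℰ𝒢 + [𝒟, ℰ], i.e., the error dynamics are independent of 𝒰. -/
open Matrix

section Aux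

attribute [local instance] Matrix.linftyOpNormedRing Matrix.linftyOpNormedAlgebra

variable {n : Type*} [Fintype n] [DecidableEq n]

/-- The identity between matrices (with the L∞-operator norm) and the pi type. -/
noncomputable def eLMat : Matrix n n ℝ ≃L[ℝ] (n → n → ℝ) :=
  ((Matrix.ofLinearEquiv ℝ).symm :
    Matrix n n ℝ ≃ₗ[ℝ] (n → n → ℝ)).toContinuousLinearEquiv

lemma hasDerivAt_matrix {f : ℝ → Matrix n n ℝ} {f' : Matrix n n ℝ} {t : ℝ} :
    HasDerivAt f f' t ↔ ∀ i j, HasDerivAt (fun τ => f τ i j) (f' i j) t := by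
  constructor
  · intro h i j
    have h1 : HasDerivAt (⇑(eLMat (n := n)).toContinuousLinearMap ∘ f)
        ((eLMat (n := n)).toContinuousLinearMap f') t :=
      ((eLMat (n := n)).toContinuousLinearMap.hasFDerivAt).comp_hasDerivAt t h
    exact hasDerivAt_pi.1 (hasDerivAt_pi.1 h1 i) j
  · intro h
    have h1 : HasDerivAt (fun τ => eLMat (f τ)) (eLMat f') t :=
      hasDerivAt_pi.2 fun i => hasDerivAt_pi.2 fun j => h i j
    have h2 : HasDerivAt (⇑(eLMat (n := n)).symm.toContinuousLinearMap ∘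
        fun τ => eLMat (f τ)) ((eLMat (n := n)).symm.toContinuousLinearMap (eLMat f')) t :=
      ((eLMat (n := n)).symm.toContinuousLinearMap.hasFDerivAt).comp_hasDerivAt t h1
    simpa [Function.comp_def] using h2

lemma hasDerivAt_ring_inverse_comp {f : ℝ → Matrix n n ℝ} {f' : Matrix n n ℝ} {t : ℝ}
    (hf : HasDerivAt f f' t) (hu : IsUnit (f t)) :
    HasDerivAt (fun τ => Ring.inverse (f τ))
      (-(Ring.inverse (f t) * f' * Ring.inverse (f t))) t := by
  obtain ⟨x, hx⟩ := hu
  have hfd : HasFDerivAt Ring.inverse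
      (-ContinuousLinearMap.mulLeftRight ℝ (Matrix n n ℝ) ↑x⁻¹ ↑x⁻¹) (f t) := by
    rw [← hx]; exact hasFDerivAt_ringInverse x
  have h := hfd.comp_hasDerivAt t hf
  have hinv : (↑x⁻¹ : Matrix n n ℝ) = Ring.inverse (f t) := by
    rw [← hx, Ring.inverse_unit]
  simp only [hinv] at h; exact h

lemma error_dynamics_aux {X Xh U G D : Matrix n n ℝ} {f fh : ℝ → Matrix n n ℝ}
    {t : ℝ}
    (hf : HasDerivAt f (X * U + G * X + (D * X - X * D)) t)
    (hfh : HasDerivAt fh (Xh * U + G * Xh + (D * Xh - Xh * D)) t)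
    (hft : f t = X) (hfht : fh t = Xh) (hu : IsUnit Xh) :
    HasDerivAt (fun τ => f τ * Ring.inverse (fh τ))
      (G * (X * Ring.inverse Xh) - (X * Ring.inverse Xh) * G +
        (D * (X * Ring.inverse Xh) - (X * Ring.inverse Xh) * D)) t := by
  set Y := Ring.inverse Xh with hY
  have h1 : Xh * Y = 1 := Ring.mul_inverse_cancel _ hu
  have h2 : Y * Xh = 1 := Ring.inverse_mul_cancel _ hu
  have hYd : HasDerivAt (fun τ => Ring.inverse (fh τ))
      (-(Y * (Xh * U + G * Xh + (D * Xh - Xh * D)) * Y)) t := by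
    have := hasDerivAt_ring_inverse_comp hfh (by rw [hfht]; exact hu)
    rw [hfht] at this; exact this
  have hmul := hf.mul hYd
  rw [hft, hfht] at hmul
  refine HasDerivAt.congr_deriv hmul ?_
  have key : Y * (Xh * U + G * Xh + (D * Xh - Xh * D)) * Y
      = U * Y + Y * G + Y * D - D * Y := by
    have e1 : Y * (Xh * U) = U := by rw [← mul_assoc, h2, one_mul]
    have e2 : Y * (Xh * D) = D := by rw [← mul_assoc, h2, one_mul]
    calc Y * (Xh * U + G * Xh + (D * Xh - Xh * D)) * Y
        = (Y * (Xh * U) + Y * (G * Xh) + (Y * (D * Xh) - Y * (Xh * D))) * Y := by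
          rw [mul_add, mul_sub, mul_add]
      _ = (U + Y * G * Xh + (Y * D * Xh - D)) * Y := by
          rw [e1, e2, mul_assoc Y G Xh, mul_assoc Y D Xh]
      _ = U * Y + Y * G * (Xh * Y) + (Y * D * (Xh * Y) - D * Y) := by
          rw [add_mul, add_mul, sub_mul, mul_assoc (Y * G), mul_assoc (Y * D)]
      _ = U * Y + Y * G + Y * D - D * Y := by
          rw [h1, mul_one, mul_one]; abel
  rw [key]
  noncomm_ring

end Aux

attribute [local instance] Matrix.linftyOpNormedRing Matrix.linftyOpNormedAlgebra

/-- If 𝒳 and 𝒳̂ both satisfy Ẋ = X𝒰 + 𝒢X + [𝒟,X] (same 𝒰(t), 𝒢, 𝒟), then the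
right-invariant error ℰ = 𝒳𝒳̂⁻¹ satisfies ℰ̇ = 𝒢ℰ − ℰ𝒢 + [𝒟,ℰ]:
the error dynamics are independent of 𝒰. -/
theorem right_invariant_error_dynamics_SE23
    (X Xh : ℝ → Matrix (Fin 3 ⊕ Fin 2) (Fin 3 ⊕ Fin 2) ℝ)
    (ω a : ℝ → Fin 3 → ℝ) (g : Fin 3 → ℝ)
    (hinv : ∀ t, IsUnit (Xh t).det)
    (hX : ∀ t i j, HasDerivAt (fun τ => X τ i j)
      ((X t * Umat (ω t) (a t) + Gmat g * X t + (Dmat * X t - X t * Dmat)) i j) t)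
    (hXh : ∀ t i j, HasDerivAt (fun τ => Xh τ i j)
      ((Xh t * Umat (ω t) (a t) + Gmat g * Xh t + (Dmat * Xh t - Xh t * Dmat)) i j) t) :
    ∀ t i j,
      HasDerivAt (fun τ => (X τ * (Xh τ)⁻¹) i j)
        ((Gmat g * (X t * (Xh t)⁻¹) - (X t * (Xh t)⁻¹) * Gmat g +
          (Dmat * (X t * (Xh t)⁻¹) - (X t * (Xh t)⁻¹) * Dmat)) i j) t := by
  intro t i j
  have hu : ∀ s, IsUnit (Xh s) := fun s => (Matrix.isUnit_iff_isUnit_det _).2 (hinv s)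
  have hXm : HasDerivAt X
      (X t * Umat (ω t) (a t) + Gmat g * X t + (Dmat * X t - X t * Dmat)) t :=
    hasDerivAt_matrix.2 (hX t)
  have hXhm : HasDerivAt Xh
      (Xh t * Umat (ω t) (a t) + Gmat g * Xh t + (Dmat * Xh t - Xh t * Dmat)) t :=
    hasDerivAt_matrix.2 (hXh t)
  have key := error_dynamics_aux (X := X t) (Xh := Xh t) (U := Umat (ω t) (a t))
    (G := Gmat g) (D := Dmat) hXm hXhm rfl rfl (hu t)
  simp only [Matrix.nonsing_inv_eq_ringInverse]
  exact hasDerivAt_matrix.1 key i j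
end

section
/- Let X = 𝒯₅(R, [p v e₁ e₂ e₃]) ∈ SE₅(3) with Ṙ = R[ω]ₓ, ṗ = v, v̇ = g + Ra, and ėᵢ = 0 for i = 1,2,3, where e₁,e₂,e₃ denote the standard basis of ℝ³ (as the initial values of three constant auxiliary states). Then X satisfies Ẋ = XU + [X, D], where U = [[[ω]ₓ, 0, a, 0_{3×3}],[0_{5×3}, 0_{5×5}]], D = [[0_{3×3}, 0_{3×5}],[0_{5×3}, Āᵀ]], and Ā ∈ ℝ^{5×5} has Ā₁₂ = 1, row 2 columns 3–5 equal to gᵀ, and all other entries zero. -/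
open Matrix

def cols5 (p v w1 w2 w3 : Fin 3 → ℝ) : Matrix (Fin 3) (Fin 5) ℝ :=
  Matrix.of fun i j => ![p i, v i, w1 i, w2 i, w3 i] j

/-- Ā ∈ ℝ^{5×5}: Ā₁₂ = 1, row 2 columns 3–5 equal to gᵀ, all other entries zero. -/
def Abar (g : Fin 3 → ℝ) : Matrix (Fin 5) (Fin 5) ℝ :=
  !![0, 1, 0, 0, 0;
     0, 0, g 0, g 1, g 2;
     0, 0, 0, 0, 0;
     0, 0, 0, 0, 0;
     0, 0, 0, 0, 0]

/-- U = [[[ω]ₓ, 0, a, 0],[0,0]] ∈ ℝ^{8×8}. -/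
def U5 (ω a : Fin 3 → ℝ) : Matrix (Fin 3 ⊕ Fin 5) (Fin 3 ⊕ Fin 5) ℝ :=
  Matrix.fromBlocks (skew ω) (cols5 0 a 0 0 0) 0 0

/-- D = [[0,0],[0, Āᵀ]] ∈ ℝ^{8×8}. -/
def D5 (g : Fin 3 → ℝ) : Matrix (Fin 3 ⊕ Fin 5) (Fin 3 ⊕ Fin 5) ℝ :=
  Matrix.fromBlocks 0 0 0 (Abar g)ᵀ

/-- The standard basis of ℝ³. -/
def stdBasis (i : Fin 3) : Fin 3 → ℝ := fun k => if k = i then 1 else 0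

lemma topright_eq (R : Matrix (Fin 3) (Fin 3) ℝ) (p v a : Fin 3 → ℝ) (g : Fin 3 → ℝ) :
    R * cols5 0 a 0 0 0 +
      cols5 p v (_root_.stdBasis 0) (_root_.stdBasis 1) (_root_.stdBasis 2) * (Abar g)ᵀ =
    cols5 v (fun i => g i + (R *ᵥ a) i) 0 0 0 := by
  ext i j
  fin_cases j <;>
    simp [cols5, Abar, _root_.stdBasis, Matrix.mul_apply, Matrix.mulVec, dotProduct,
      Matrix.transpose_apply, Matrix.vecHead, Matrix.vecTail, Function.comp,
      Fin.sum_univ_three, Fin.sum_univ_five] <;>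
    fin_cases i <;> (norm_num [Fin.ext_iff]; try ring_nf; try rfl)

lemma rhs_eq (R : Matrix (Fin 3) (Fin 3) ℝ) (p v a ω : Fin 3 → ℝ) (g : Fin 3 → ℝ) :
    Tn 5 R (cols5 p v (_root_.stdBasis 0) (_root_.stdBasis 1) (_root_.stdBasis 2)) * U5 ω a +
      (Tn 5 R (cols5 p v (_root_.stdBasis 0) (_root_.stdBasis 1) (_root_.stdBasis 2)) * D5 g -
        D5 g * Tn 5 R (cols5 p v (_root_.stdBasis 0) (_root_.stdBasis 1) (_root_.stdBasis 2))) =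
    Matrix.fromBlocks (R * skew ω)
      (cols5 v (fun i => g i + (R *ᵥ a) i) 0 0 0) 0 0 := by
  rw [Tn, U5, D5, Matrix.fromBlocks_multiply, Matrix.fromBlocks_multiply,
    Matrix.fromBlocks_multiply]
  simp only [Matrix.mul_zero, Matrix.zero_mul, Matrix.mul_one, Matrix.one_mul,
    add_zero, zero_add]
  rw [sub_eq_add_neg, Matrix.fromBlocks_neg]
  simp only [neg_zero]
  rw [Matrix.fromBlocks_add, Matrix.fromBlocks_add]
  simp only [add_zero, zero_add, add_neg_cancel]
  rw [topright_eq]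

/-- The SE₅(3) compact form: if Ṙ = R[ω]ₓ, ṗ = v, v̇ = g + Ra and the auxiliary
states eᵢ are constant (standard basis), then X = 𝒯₅(R,[p v e₁ e₂ e₃]) satisfies
Ẋ = XU + [X, D] with [A,B] = AB − BA. -/
theorem SE53_compact_kinematics
    (R : ℝ → Matrix (Fin 3) (Fin 3) ℝ) (p v : ℝ → Fin 3 → ℝ)
    (ω a : ℝ → Fin 3 → ℝ) (g : Fin 3 → ℝ)
    (hR : ∀ t i j, HasDerivAt (fun τ => R τ i j) ((R t * skew (ω t)) i j) t)
    (hp : ∀ t i, HasDerivAt (fun τ => p τ i) (v t i) t)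
    (hv : ∀ t i, HasDerivAt (fun τ => v τ i) (g i + (R t *ᵥ a t) i) t) :
    ∀ t i j,
      HasDerivAt
        (fun τ => Tn 5 (R τ) (cols5 (p τ) (v τ) (stdBasis 0) (stdBasis 1) (stdBasis 2)) i j)
        ((Tn 5 (R t) (cols5 (p t) (v t) (stdBasis 0) (stdBasis 1) (stdBasis 2)) * U5 (ω t) (a t) +
          (Tn 5 (R t) (cols5 (p t) (v t) (stdBasis 0) (stdBasis 1) (stdBasis 2)) * D5 g -
            D5 g * Tn 5 (R t) (cols5 (p t) (v t) (stdBasis 0) (stdBasis 1) (stdBasis 2)))) i j) t := by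
  intro t i j
  rw [rhs_eq]
  obtain i | i := i <;> obtain j | j := j
  · simpa [Tn] using hR t i j
  · fin_cases j
    · simpa [Tn, cols5] using hp t i
    · simpa [Tn, cols5] using hv t i
    · simpa [Tn, cols5] using hasDerivAt_const t ((_root_.stdBasis 0 : Fin 3 → ℝ) i)
    · simpa [Tn, cols5] using hasDerivAt_const t ((_root_.stdBasis 1 : Fin 3 → ℝ) i)
    · simpa [Tn, cols5] using hasDerivAt_const t ((_root_.stdBasis 2 : Fin 3 → ℝ) i)
  · simpa [Tn] using hasDerivAt_const t (0 : ℝ)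
  · simpa [Tn] using hasDerivAt_const t ((1 : Matrix (Fin 5) (Fin 5) ℝ) i j)
end

section
/- Let X = 𝒯₅(R, z) and X̂ = 𝒯₅(R̂, ẑ) both satisfy Ẋ = XU + [X, D] (same U(t), D). Then E = XX̂⁻¹ = 𝒯₅(R̃, z̃) with R̃ = RR̂ᵀ and z̃ = z − R̃ẑ satisfies Ė = [[0_{3×3}, z̃Āᵀ],[0_{5×3}, 0_{5×5}]]. In particular R̃ is constant and the translational error z̃ evolves linearly, decoupled from R̃. -/
open Matrix

def isSO3 (R : Matrix (Fin 3) (Fin 3) ℝ) : Prop :=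
  R.det = 1 ∧ R * Rᵀ = 1 ∧ Rᵀ * R = 1

lemma hasDerivAt_matrix_mul {m n p : Type*} [Fintype n]
    (M : ℝ → Matrix m n ℝ) (N : ℝ → Matrix n p ℝ)
    (M' : Matrix m n ℝ) (N' : Matrix n p ℝ) (t : ℝ)
    (hM : ∀ i j, HasDerivAt (fun τ => M τ i j) (M' i j) t)
    (hN : ∀ i j, HasDerivAt (fun τ => N τ i j) (N' i j) t) (i : m) (j : p) :
    HasDerivAt (fun τ => (M τ * N τ) i j) ((M' * N t + M t * N') i j) t := by
  simp only [Matrix.mul_apply, Matrix.add_apply]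
  rw [← Finset.sum_add_distrib]
  exact HasDerivAt.fun_sum fun k _ => (hM i k).mul (hN k j)

lemma skew_add_transpose (ω : Fin 3 → ℝ) : skew ω + (skew ω)ᵀ = 0 := by
  ext i j
  rw [Matrix.add_apply, Matrix.transpose_apply, Matrix.zero_apply]
  fin_cases i <;> fin_cases j <;> simp [skew]

lemma dyn_blocks (R : Matrix (Fin 3) (Fin 3) ℝ) (z : Matrix (Fin 3) (Fin 5) ℝ)
    (ω a : Fin 3 → ℝ) (g : Fin 3 → ℝ) :
    (Tn 5 R z * U5 ω a + (Tn 5 R z * D5 g - D5 g * Tn 5 R z)) =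
      Matrix.fromBlocks (R * skew ω) (R * cols5 0 a 0 0 0 + z * (Abar g)ᵀ) 0 0 := by
  simp [Tn, U5, D5, Matrix.fromBlocks_multiply, Matrix.fromBlocks_add]
  ext (i|i) (j|j) <;> simp [Matrix.fromBlocks]

lemma mulTn (A B : Matrix (Fin 3) (Fin 3) ℝ) (x y : Matrix (Fin 3) (Fin 5) ℝ) :
    Tn 5 A x * Tn 5 B y = Tn 5 (A * B) (A * y + x) := by
  simp [Tn, Matrix.fromBlocks_multiply]

/-- If X = 𝒯₅(R,z) and X̂ = 𝒯₅(R̂,ẑ) both satisfy Ẋ = XU + [X,D], then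
E = XX̂⁻¹ = 𝒯₅(R̃, z̃) with R̃ = RR̂ᵀ, z̃ = z − R̃ẑ satisfies
Ė = [[0, z̃Āᵀ],[0,0]]; in particular R̃ is constant and z̃ evolves linearly,
decoupled from R̃. -/
theorem SE53_error_dynamics_decoupled
    (R Rh : ℝ → Matrix (Fin 3) (Fin 3) ℝ) (z zh : ℝ → Matrix (Fin 3) (Fin 5) ℝ)
    (ω a : ℝ → Fin 3 → ℝ) (g : Fin 3 → ℝ)
    (hSO : ∀ t, isSO3 (R t)) (hSOh : ∀ t, isSO3 (Rh t))
    (hX : ∀ t i j, HasDerivAt (fun τ => Tn 5 (R τ) (z τ) i j)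
      ((Tn 5 (R t) (z t) * U5 (ω t) (a t) +
        (Tn 5 (R t) (z t) * D5 g - D5 g * Tn 5 (R t) (z t))) i j) t)
    (hXh : ∀ t i j, HasDerivAt (fun τ => Tn 5 (Rh τ) (zh τ) i j)
      ((Tn 5 (Rh t) (zh t) * U5 (ω t) (a t) +
        (Tn 5 (Rh t) (zh t) * D5 g - D5 g * Tn 5 (Rh t) (zh t))) i j) t) :
    (∀ t, Tn 5 (R t) (z t) * (Tn 5 (Rh t) (zh t))⁻¹ =
        Tn 5 (R t * (Rh t)ᵀ) (z t - (R t * (Rh t)ᵀ) * zh t)) ∧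
    (∀ t i j,
      HasDerivAt
        (fun τ => Tn 5 (R τ * (Rh τ)ᵀ) (z τ - (R τ * (Rh τ)ᵀ) * zh τ) i j)
        ((Matrix.fromBlocks 0 ((z t - (R t * (Rh t)ᵀ) * zh t) * (Abar g)ᵀ) 0 0 :
          Matrix (Fin 3 ⊕ Fin 5) (Fin 3 ⊕ Fin 5) ℝ) i j) t) ∧
    (∀ t, R t * (Rh t)ᵀ = R 0 * (Rh 0)ᵀ) := by
  set B : ℝ → Matrix (Fin 3) (Fin 5) ℝ := fun t => cols5 0 (a t) 0 0 0 with hB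
  -- entrywise dynamics
  have split : ∀ (S : ℝ → Matrix (Fin 3) (Fin 3) ℝ) (w : ℝ → Matrix (Fin 3) (Fin 5) ℝ),
      (∀ t i j, HasDerivAt (fun τ => Tn 5 (S τ) (w τ) i j)
      ((Tn 5 (S t) (w t) * U5 (ω t) (a t) +
        (Tn 5 (S t) (w t) * D5 g - D5 g * Tn 5 (S t) (w t))) i j) t) →
      (∀ t i j, HasDerivAt (fun τ => S τ i j) ((S t * skew (ω t)) i j) t) ∧
      (∀ t i j, HasDerivAt (fun τ => w τ i j) ((S t * B t + w t * (Abar g)ᵀ) i j) t) := by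
    intro S w h
    constructor
    · intro t i j
      have := h t (Sum.inl i) (Sum.inl j)
      rwa [dyn_blocks] at this
    · intro t i j
      have := h t (Sum.inl i) (Sum.inr j)
      rwa [dyn_blocks] at this
  obtain ⟨hR, hz⟩ := split R z hX
  obtain ⟨hRh, hzh⟩ := split Rh zh hXh
  -- derivative of the rotation error is zero
  have hRt : ∀ t i j, HasDerivAt (fun τ => (R τ * (Rh τ)ᵀ) i j) 0 t := by
    intro t i j
    have hN : ∀ i j, HasDerivAt (fun τ => (Rh τ)ᵀ i j) ((Rh t * skew (ω t))ᵀ i j) t :=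
      fun i j => hRh t j i
    have := hasDerivAt_matrix_mul R (fun τ => (Rh τ)ᵀ)
      (R t * skew (ω t)) ((Rh t * skew (ω t))ᵀ) t (hR t) hN i j
    have h0 : R t * skew (ω t) * (Rh t)ᵀ + R t * (Rh t * skew (ω t))ᵀ = 0 := by
      rw [Matrix.mul_assoc, Matrix.transpose_mul, ← Matrix.mul_add, ← Matrix.add_mul,
        skew_add_transpose, Matrix.zero_mul, Matrix.mul_zero]
    rwa [h0, Matrix.zero_apply] at this
  -- derivative of the translation error
  have hzt : ∀ t i j, HasDerivAt (fun τ => (z τ - (R τ * (Rh τ)ᵀ) * zh τ) i j)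
      (((z t - (R t * (Rh t)ᵀ) * zh t) * (Abar g)ᵀ) i j) t := by
    intro t i j
    have hprod := hasDerivAt_matrix_mul (fun τ => R τ * (Rh τ)ᵀ) zh 0
      (Rh t * B t + zh t * (Abar g)ᵀ) t (hRt t) (hzh t) i j
    have := (hz t i j).sub hprod
    have halg : (R t * B t + z t * (Abar g)ᵀ) -
        ((0 : Matrix (Fin 3) (Fin 3) ℝ) * zh t + (R t * (Rh t)ᵀ) * (Rh t * B t + zh t * (Abar g)ᵀ)) =
        (z t - (R t * (Rh t)ᵀ) * zh t) * (Abar g)ᵀ := by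
      rw [Matrix.zero_mul, zero_add, Matrix.mul_add, ← Matrix.mul_assoc,
        Matrix.mul_assoc (R t) ((Rh t)ᵀ) (Rh t), (hSOh t).2.2, Matrix.mul_one,
        Matrix.sub_mul]
      simp only [Matrix.mul_assoc]
      abel
    simp only [← Matrix.sub_apply] at this
    rwa [halg] at this
  refine ⟨?_, ?_, ?_⟩
  · intro t
    have hinv : (Tn 5 (Rh t) (zh t))⁻¹ = Tn 5 (Rh t)ᵀ (-((Rh t)ᵀ * zh t)) := by
      apply Matrix.inv_eq_right_inv
      rw [mulTn, (hSOh t).2.1, Matrix.mul_neg, ← Matrix.mul_assoc, (hSOh t).2.1,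
        Matrix.one_mul, neg_add_cancel]
      simp [Tn, Matrix.fromBlocks_one]
    rw [hinv, mulTn, Matrix.mul_neg, ← Matrix.mul_assoc, neg_add_eq_sub]
  · intro t i j
    match i, j with
    | Sum.inl i, Sum.inl j => exact hRt t i j
    | Sum.inl i, Sum.inr j => exact hzt t i j
    | Sum.inr i, Sum.inl j =>
      have : (fun τ => Tn 5 (R τ * (Rh τ)ᵀ) (z τ - (R τ * (Rh τ)ᵀ) * zh τ) (Sum.inr i) (Sum.inl j))
          = fun _ => (0 : ℝ) := rfl
      rw [this]
      exact hasDerivAt_const t 0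
    | Sum.inr i, Sum.inr j =>
      have : (fun τ => Tn 5 (R τ * (Rh τ)ᵀ) (z τ - (R τ * (Rh τ)ᵀ) * zh τ) (Sum.inr i) (Sum.inr j))
          = fun _ => ((1 : Matrix (Fin 5) (Fin 5) ℝ) i j) := rfl
      rw [this]
      exact hasDerivAt_const t _
  · intro t
    ext i j
    exact is_const_of_deriv_eq_zero
      (fun s => (hRt s i j).differentiableAt)
      (fun s => (hRt s i j).deriv) t 0
end

section
/- Let X = 𝒯₅(R, [p v e₁ e₂ e₃]) ∈ SE₅(3). For an inertial-frame measurement η = p + Rb with known b ∈ ℝ³, defining r = (1, 0, −ηᵀ)ᵀ ∈ ℝ⁵, 𝐫 = (0₃ᵀ, rᵀ)ᵀ ∈ ℝ⁸ and 𝐲 = (bᵀ, rᵀ)ᵀ ∈ ℝ⁸, one has 𝐲 = X⁻¹𝐫. -/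
open Matrix

/-- Inertial-frame measurement η = p + Rb: with r = (1,0,−ηᵀ)ᵀ, 𝐫 = (0₃ᵀ, rᵀ)ᵀ
and 𝐲 = (bᵀ, rᵀ)ᵀ, one has 𝐲 = X⁻¹𝐫. -/
theorem inertial_frame_measurement_SE53
    (R : Matrix (Fin 3) (Fin 3) ℝ) (hR : isSO3 R) (p v : Fin 3 → ℝ)
    (b : Fin 3 → ℝ) :
    Sum.elim b ![1, 0, -(p + R *ᵥ b) 0, -(p + R *ᵥ b) 1, -(p + R *ᵥ b) 2] =
      (Tn 5 R (cols5 p v (stdBasis 0) (stdBasis 1) (stdBasis 2)))⁻¹ *ᵥ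
        Sum.elim 0 ![1, 0, -(p + R *ᵥ b) 0, -(p + R *ᵥ b) 1, -(p + R *ᵥ b) 2] := by
  set X := Tn 5 R (cols5 p v (stdBasis 0) (stdBasis 1) (stdBasis 2)) with hXdef
  set r : Fin 5 → ℝ := ![1, 0, -(p + R *ᵥ b) 0, -(p + R *ᵥ b) 1, -(p + R *ᵥ b) 2] with hr
  haveI hRi : Invertible R := ⟨Rᵀ, hR.2.2, hR.2.1⟩
  haveI hXi : Invertible X := by
    rw [hXdef, Tn]
    haveI : Invertible (1 : Matrix (Fin 5) (Fin 5) ℝ) := invertibleOne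
    exact Matrix.fromBlocksZero₂₁Invertible R _ 1
  have hcol : cols5 p v (stdBasis 0) (stdBasis 1) (stdBasis 2) *ᵥ r = -(R *ᵥ b) := by
    funext i
    simp [Matrix.mulVec, dotProduct, Fin.sum_univ_five, cols5, hr, _root_.stdBasis]
    fin_cases i <;> simp [Matrix.mulVec, dotProduct, Fin.sum_univ_three] <;> ring
  have hX : X *ᵥ Sum.elim b r = Sum.elim (0 : Fin 3 → ℝ) r := by
    rw [hXdef, Tn, Matrix.fromBlocks_mulVec]
    have h1 : (Sum.elim b r) ∘ Sum.inl = b := rfl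
    have h2 : (Sum.elim b r) ∘ Sum.inr = r := rfl
    rw [h1, h2, hcol]
    simp
  calc Sum.elim b r = X⁻¹ *ᵥ (X *ᵥ Sum.elim b r) := by
        rw [Matrix.mulVec_mulVec, Matrix.nonsing_inv_mul _ X.isUnit_det_of_invertible, Matrix.one_mulVec]
    _ = X⁻¹ *ᵥ Sum.elim 0 r := by rw [hX]
end

section
/- For the trace function V(R̃) = tr(M(I₃ − R̃)) on SO(3) with M = diag(ρ₁,ρ₂,ρ₃), ρᵢ > 0 distinct, along the flow Ṙ̃ = R̃[−ψ(MR̃)]ₓ one has V̇(R̃) = −2‖ψ(MR̃)‖², and the critical points of the flow (where ψ(MR̃) = 0) are exactly R̃ = I₃ and the three rotations by angle π about the coordinate axes e₁, e₂, e₃. -/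
open Matrix

noncomputable def psi (A : Matrix (Fin 3) (Fin 3) ℝ) : Fin 3 → ℝ :=
  ![(A 2 1 - A 1 2) / 2, (A 0 2 - A 2 0) / 2, (A 1 0 - A 0 1) / 2]

/-- Along Ṙ̃ = R̃[−ψ(MR̃)]ₓ, the Lyapunov function V(R̃) = tr(M(I − R̃)) with
M = diag(ρ₁,ρ₂,ρ₃), ρᵢ > 0 distinct, satisfies V̇ = −2‖ψ(MR̃)‖², and the
critical points (ψ(MR̃) = 0, R̃ ∈ SO(3)) are exactly I₃ and the three rotations
by π about the coordinate axes. -/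
theorem attitude_lyapunov_and_critical_points
    (ρ : Fin 3 → ℝ) (hρpos : ∀ i, 0 < ρ i)
    (hρdist : ρ 0 ≠ ρ 1 ∧ ρ 0 ≠ ρ 2 ∧ ρ 1 ≠ ρ 2) :
    (∀ (Rt : ℝ → Matrix (Fin 3) (Fin 3) ℝ),
      (∀ t, isSO3 (Rt t)) →
      (∀ t i j, HasDerivAt (fun τ => Rt τ i j)
        ((Rt t * skew (-(psi (Matrix.diagonal ρ * Rt t)))) i j) t) →
      ∀ t, HasDerivAt
        (fun τ => Matrix.trace (Matrix.diagonal ρ * (1 - Rt τ)))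
        (-2 * ∑ k, psi (Matrix.diagonal ρ * Rt t) k ^ 2) t) ∧
    (∀ R : Matrix (Fin 3) (Fin 3) ℝ, isSO3 R →
      (psi (Matrix.diagonal ρ * R) = 0 ↔
        R = 1 ∨ R = !![(1:ℝ), 0, 0; 0, -1, 0; 0, 0, -1] ∨
          R = !![(-1:ℝ), 0, 0; 0, 1, 0; 0, 0, -1] ∨
          R = !![(-1:ℝ), 0, 0; 0, -1, 0; 0, 0, 1])) := by
  constructor
  · intro Rt _ hderiv t
    have hfun : (fun τ => Matrix.trace (Matrix.diagonal ρ * (1 - Rt τ)))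
        = fun τ => (ρ 0 + ρ 1 + ρ 2) - (ρ 0 * Rt τ 0 0 + ρ 1 * Rt τ 1 1 + ρ 2 * Rt τ 2 2) := by
      funext τ
      simp [Matrix.trace, Matrix.diag, Matrix.mul_apply, Fin.sum_univ_three, Matrix.one_apply,
        Matrix.diagonal, Matrix.sub_apply]
      ring
    rw [hfun]
    have h0 := (hderiv t 0 0).const_mul (ρ 0)
    have h1 := (hderiv t 1 1).const_mul (ρ 1)
    have h2 := (hderiv t 2 2).const_mul (ρ 2)
    have h := ((h0.add h1).add h2).const_sub (ρ 0 + ρ 1 + ρ 2)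
    refine h.congr_deriv ?_
    simp [psi, skew, Matrix.mul_apply, Fin.sum_univ_three, Matrix.diagonal_mul]
    ring
  · intro R hR
    obtain ⟨hdet, hRRt, hRtR⟩ := hR
    obtain ⟨h01, h02, h12⟩ := hρdist
    constructor
    · intro hpsi
      set M := Matrix.diagonal ρ with hM
      have e0 := congrFun hpsi 0
      have e1 := congrFun hpsi 1
      have e2 := congrFun hpsi 2
      simp [psi] at e0 e1 e2
      have hS : (M * R)ᵀ = M * R := by
        ext i j
        fin_cases i <;> fin_cases j <;> simp only [Matrix.transpose_apply] <;>
          first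
            | rfl
            | exact sub_eq_zero.mp e0 | exact (sub_eq_zero.mp e0).symm
            | exact sub_eq_zero.mp e1 | exact (sub_eq_zero.mp e1).symm
            | exact sub_eq_zero.mp e2 | exact (sub_eq_zero.mp e2).symm
      have hSS : (M * R) * (M * R) = Matrix.diagonal (fun i => ρ i * ρ i) := by
        calc (M * R) * (M * R) = (M * R) * (M * R)ᵀ := by rw [hS]
          _ = M * (R * Rᵀ) * Mᵀ := by
              rw [Matrix.transpose_mul]
              simp [mul_assoc]
          _ = Matrix.diagonal (fun i => ρ i * ρ i) := by
              rw [hRRt, mul_one, hM, Matrix.diagonal_transpose,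
                Matrix.diagonal_mul_diagonal]
      have comm : (M * R) * Matrix.diagonal (fun i => ρ i * ρ i)
          = Matrix.diagonal (fun i => ρ i * ρ i) * (M * R) := by
        rw [← hSS, ← mul_assoc, mul_assoc]
      have hoff : ∀ i j, i ≠ j → R i j = 0 := by
        intro i j hij
        have h := congrFun (congrFun comm i) j
        simp only [hM, Matrix.mul_diagonal, Matrix.diagonal_mul] at h
        have hne : ρ i ≠ ρ j := by
          fin_cases i <;> fin_cases j <;>
            first
              | exact absurd rfl hij
              | exact h01 | exact h01.symm | exact h02 | exact h02.symm
              | exact h12 | exact h12.symm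
        have hz : R i j * (ρ i * ((ρ j - ρ i) * (ρ j + ρ i))) = 0 := by
          linear_combination h
        have hnz : ρ i * ((ρ j - ρ i) * (ρ j + ρ i)) ≠ 0 := by
          have := hρpos i; have := hρpos j
          intro hc
          rcases mul_eq_zero.mp hc with h' | h'
          · linarith
          · rcases mul_eq_zero.mp h' with h'' | h''
            · exact hne (by linarith)
            · linarith
        exact (mul_eq_zero.mp hz).resolve_right hnz
      have d01 := hoff 0 1 (by decide)
      have d02 := hoff 0 2 (by decide)
      have d10 := hoff 1 0 (by decide)
      have d12 := hoff 1 2 (by decide)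
      have d20 := hoff 2 0 (by decide)
      have d21 := hoff 2 1 (by decide)
      have q0 := congrFun (congrFun hRRt 0) 0
      have q1 := congrFun (congrFun hRRt 1) 1
      have q2 := congrFun (congrFun hRRt 2) 2
      simp [Matrix.mul_apply, Fin.sum_univ_three, Matrix.one_apply, d01, d02, d10, d12, d20, d21]
        at q0 q1 q2
      rw [Matrix.det_fin_three] at hdet
      rw [d01, d02, d10, d12, d20, d21] at hdet
      ring_nf at hdet
      -- q0 : R 0 0 * R 0 0 = 1 etc.
      have c0 : R 0 0 = 1 ∨ R 0 0 = -1 := by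
        rcases mul_self_eq_one_iff.mp q0 with h | h
        · exact Or.inl h
        · exact Or.inr h
      have c1 : R 1 1 = 1 ∨ R 1 1 = -1 := mul_self_eq_one_iff.mp q1
      have c2 : R 2 2 = 1 ∨ R 2 2 = -1 := mul_self_eq_one_iff.mp q2
      have hmat : ∀ a b c : ℝ, R 0 0 = a → R 1 1 = b → R 2 2 = c →
          R = !![a, 0, 0; 0, b, 0; 0, 0, c] := by
        intro a b c ha hb hc
        ext i j
        fin_cases i <;> fin_cases j <;>
          simp [d01, d02, d10, d12, d20, d21, ha, hb, hc, Matrix.vecHead, Matrix.vecTail]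
      rcases c0 with h0 | h0 <;> rcases c1 with h1 | h1 <;> rcases c2 with h2 | h2
      · left
        have := hmat 1 1 1 h0 h1 h2
        rw [this]; ext i j; fin_cases i <;> fin_cases j <;> simp [Matrix.one_apply, Matrix.vecHead, Matrix.vecTail]
      · rw [h0, h1, h2] at hdet; norm_num at hdet
      · rw [h0, h1, h2] at hdet; norm_num at hdet
      · right; left; exact hmat 1 (-1) (-1) h0 h1 h2
      · rw [h0, h1, h2] at hdet; norm_num at hdet
      · right; right; left; exact hmat (-1) 1 (-1) h0 h1 h2
      · right; right; right; exact hmat (-1) (-1) 1 h0 h1 h2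
      · rw [h0, h1, h2] at hdet; norm_num at hdet
    · intro h
      funext k
      rcases h with h | h | h | h <;> subst h <;>
        fin_cases k <;>
        simp [psi, Matrix.mul_apply, Fin.sum_univ_three, Matrix.diagonal, Matrix.one_apply,
          Matrix.vecHead, Matrix.vecTail]
end
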